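/- Let G = {(x,y) ∈ [0,1]² : y ≤ x} and suppose 0 ≤ p < q ≤ 1. Then ent(G ∪ {(p,q)}) = ∞ (while ent(G) = 0), so adding a single point above the diagonal to the zero-entropy set G produces a set of infinite entropy. -/

import Mathlib

open Set Filter Topology unitInterval
open scoped Classical

noncomputable section

/-- The shift map on sequences in the unit interval. -/
def shiftMap (x : ℕ → unitInterval) : ℕ → unitInterval := fun n => x (n + 1)

/-- The `m`-fold Mahavier product `⋆_{i=1}^m G` of a set `G ⊆ [0,1]²`. -/
def MahavierFin (G : Set (unitInterval × unitInterval)) (m : ℕ) :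
    Set (Fin (m + 1) → unitInterval) :=
  {x | ∀ i : Fin m, (x i.castSucc, x i.succ) ∈ G}

/-- The infinite Mahavier product `⋆_{i=1}^∞ G` of a set `G ⊆ [0,1]²`. -/
def MahavierInf (G : Set (unitInterval × unitInterval)) : Set (ℕ → unitInterval) :=
  {x | ∀ i : ℕ, (x i, x (i + 1)) ∈ G}

/-- The `m`-fold Mahavier product of `H ⊆ [0,1]^{N+1}`, a subset of `[0,1]^{mN+1}`. -/
def MahavierFinN (N : ℕ) (H : Set (Fin (N + 1) → unitInterval)) (m : ℕ) :
    Set (Fin (m * N + 1) → unitInterval) :=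
  {x | ∀ j : Fin m, (fun i : Fin (N + 1) =>
      x ⟨j.1 * N + i.1, by
        have hi : i.1 ≤ N := Nat.lt_succ_iff.mp i.2
        have hj : j.1 + 1 ≤ m := j.2
        have h : (j.1 + 1) * N ≤ m * N := Nat.mul_le_mul_right N hj
        have h2 : (j.1 + 1) * N = j.1 * N + N := by ring
        omega⟩) ∈ H}

/-- The infinite Mahavier product of `H ⊆ [0,1]^{N+1}`. -/
def MahavierInfN (N : ℕ) (H : Set (Fin (N + 1) → unitInterval)) :
    Set (ℕ → unitInterval) :=
  {x | ∀ j : ℕ, (fun i : Fin (N + 1) => x (j * N + i.1)) ∈ H}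

/-- The least cardinality of a subcollection of `U` covering `K`. -/
def coverNum {X : Type*} (K : Set X) (U : Set (Set X)) : ℕ :=
  sInf {n | ∃ F : Finset (Set X), ↑F ⊆ U ∧ F.card = n ∧ K ⊆ ⋃₀ ↑F}

/-- `α` is a minimal finite cover of `[0,1]` by open intervals: every member is open in
`[0,1]` and order-connected (an interval), `α` covers `[0,1]`, and no proper
subcollection of `α` covers `[0,1]`. -/
def IsMinimalIntervalCover (α : Finset (Set unitInterval)) : Prop :=
  (∀ u ∈ α, IsOpen u ∧ u.OrdConnected) ∧
  (⋃₀ (α : Set (Set unitInterval)) = Set.univ) ∧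
  ∀ β : Finset (Set unitInterval), β ⊆ α →
    ⋃₀ (β : Set (Set unitInterval)) = Set.univ → β = α

/-- The grid cover `α^k` of `[0,1]^k`: all products of `k` members of `α`. -/
def gridCover (α : Finset (Set unitInterval)) (k : ℕ) :
    Set (Set (Fin k → unitInterval)) :=
  {s | ∃ f : Fin k → Set unitInterval, (∀ i, f i ∈ α) ∧ s = {x | ∀ i, x i ∈ f i}}

/-- Entropy of `G ⊆ [0,1]²` relative to the cover `α`: the limit (realized as a `limsup`)
of `(1/m) log N(⋆_{i=1}^m G, α^{m+1})` if `⋆_{i=1}^∞ G ≠ ∅`, and `0` otherwise. -/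
def entOf (G : Set (unitInterval × unitInterval))
    (α : Finset (Set unitInterval)) : ENNReal :=
  if (MahavierInf G).Nonempty then
    Filter.limsup (fun m : ℕ =>
      ENNReal.ofReal
        (Real.log (coverNum (MahavierFin G m) (gridCover α (m + 1))) / m))
      Filter.atTop
  else 0

/-- Topological entropy of `G ⊆ [0,1]²`: the supremum of `entOf G α` over all minimal
open interval covers `α` of `[0,1]`. -/
def ent (G : Set (unitInterval × unitInterval)) : ENNReal :=
  ⨆ α : {α : Finset (Set unitInterval) // IsMinimalIntervalCover α}, entOf G α.1

/-- Entropy of `H ⊆ [0,1]^{N+1}` relative to the cover `α`. -/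
def entOfN (N : ℕ) (H : Set (Fin (N + 1) → unitInterval))
    (α : Finset (Set unitInterval)) : ENNReal :=
  if (MahavierInfN N H).Nonempty then
    Filter.limsup (fun m : ℕ =>
      ENNReal.ofReal
        (Real.log (coverNum (MahavierFinN N H m) (gridCover α (m * N + 1))) / m))
      Filter.atTop
  else 0

/-- Topological entropy of `H ⊆ [0,1]^{N+1}`. -/
def entN (N : ℕ) (H : Set (Fin (N + 1) → unitInterval)) : ENNReal :=
  ⨆ α : {α : Finset (Set unitInterval) // IsMinimalIntervalCover α}, entOfN N H α.1

/-- An open cover of a topological space. -/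
def IsOpenCover {X : Type*} [TopologicalSpace X] (U : Set (Set X)) : Prop :=
  (∀ u ∈ U, IsOpen u) ∧ ⋃₀ U = Set.univ

/-- The join `U ∨ T⁻¹U ∨ ⋯ ∨ T⁻ⁿU` of the open cover `U` under the map `T`. -/
def dynJoin {X : Type*} (T : X → X) (U : Set (Set X)) (n : ℕ) : Set (Set X) :=
  {s | ∃ f : Fin (n + 1) → Set X, (∀ i, f i ∈ U) ∧ s = ⋂ i, T^[i.1] ⁻¹' f i}

/-- The Adler–Konheim–McAndrew topological entropy of `T : X → X`: the supremum over all
open covers `U` of `X` of `lim (1/n) log N(X, U ∨ T⁻¹U ∨ ⋯ ∨ T⁻ⁿU)` (as a `limsup`). -/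
def akmEntropy {X : Type*} [TopologicalSpace X] (T : X → X) : ENNReal :=
  ⨆ U : {U : Set (Set X) // IsOpenCover U},
    Filter.limsup (fun n : ℕ =>
      ENNReal.ofReal (Real.log (coverNum Set.univ (dynJoin T U.1 n)) / n))
      Filter.atTop

/-!
In `⋆_{i=1}^m G` for the triangle `G` every sequence is non-increasing. A Lebesgue number of an
open cover `α` yields a partition of `[0,1]` into `J` consecutive intervals, each inside a member
of `α`; so these sequences are covered by the boxes indexed by the non-increasing maps
`{0, …, m} → {1, …, J}`, of which there are at most `(m + 2) ^ J`. Polynomial growth of the cover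
numbers means entropy `0`.

With the point `(p, q)` added, every sequence `q, y₀, p, q, y₁, p, …` with all `yₜ ∈ [p, q]` is in
the Mahavier product. Take `M` equally spaced points in `[p, q]` and a minimal interval cover by
sets of diameter below their spacing: different choices of the `yₜ` among these points lie in
different boxes, so the cover numbers are at least `M ^ ⌊(m + 1) / 3⌋` and the entropy is at least
`log M / 6`, for every `M`.
-/

lemma coverNum_le_card {X : Type*} {K : Set X} {U : Set (Set X)} {F : Finset (Set X)}
    (hFU : ↑F ⊆ U) (hKF : K ⊆ ⋃₀ ↑F) : coverNum K U ≤ F.card :=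
  Nat.sInf_le ⟨F, hFU, rfl, hKF⟩

lemma card_le_coverNum {X ι : Type*} [Fintype ι] {K : Set X} {U : Set (Set X)}
    (hU : ∃ F : Finset (Set X), ↑F ⊆ U ∧ K ⊆ ⋃₀ ↑F) (P : ι → X) (hPK : ∀ i, P i ∈ K)
    (hsep : ∀ u ∈ U, ∀ i j, P i ∈ u → P j ∈ u → i = j) :
    Fintype.card ι ≤ coverNum K U := by
  obtain ⟨F₀, hF₀U, hKF₀⟩ := hU
  refine le_csInf ⟨_, F₀, hF₀U, rfl, hKF₀⟩ ?_
  rintro _ ⟨F, hFU, rfl, hKF⟩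
  choose box hboxF hPbox using fun i => hKF (hPK i)
  have hinj : Function.Injective box := fun i j hij =>
    hsep _ (hFU (hboxF i)) i j (hPbox i) (hij ▸ hPbox j)
  exact Finset.card_le_card_of_injOn (s := Finset.univ) box (fun i _ => hboxF i) hinj.injOn

lemma exists_finset_subset_gridCover {α : Finset (Set unitInterval)}
    (hα : ⋃₀ (α : Set (Set unitInterval)) = univ) (n : ℕ) (K : Set (Fin n → unitInterval)) :
    ∃ F : Finset (Set (Fin n → unitInterval)), ↑F ⊆ gridCover α n ∧ K ⊆ ⋃₀ ↑F := by
  refine ⟨Finset.univ.image fun f : Fin n → α => {x | ∀ i, x i ∈ (f i : Set unitInterval)},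
    ?_, fun x _ => ?_⟩
  · rintro _ hs
    obtain ⟨f, -, rfl⟩ := Finset.mem_image.1 hs
    exact ⟨fun i => f i, fun i => (f i).2, rfl⟩
  · have hx : ∀ i, ∃ u ∈ α, x i ∈ u := fun i => by
      simpa using hα.ge (mem_univ (x i))
    choose f hfα hxf using hx
    exact ⟨_, Finset.mem_image.2 ⟨fun i => ⟨f i, hfα i⟩, Finset.mem_univ _, rfl⟩, hxf⟩

lemma restrict_mem_mahavierFin {G : Set (unitInterval × unitInterval)} {x : ℕ → unitInterval}
    (hx : x ∈ MahavierInf G) (m : ℕ) : (fun i : Fin (m + 1) => x i) ∈ MahavierFin G m :=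
  fun i => hx i

lemma tendsto_log_add_two_div_atTop :
    Tendsto (fun m : ℕ => Real.log (m + 2) / m) atTop (𝓝 0) := by
  have h := (Real.tendsto_pow_log_div_mul_add_atTop 1 (-2) 1 one_ne_zero).comp
    (tendsto_atTop_add_const_right atTop 2 tendsto_natCast_atTop_atTop)
  refine h.congr fun m => ?_
  simp

lemma entOf_eq_zero_of_coverNum_le_pow {G : Set (unitInterval × unitInterval)}
    {α : Finset (Set unitInterval)} (J : ℕ)
    (hN : ∀ m, coverNum (MahavierFin G m) (gridCover α (m + 1)) ≤ (m + 2) ^ J) :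
    entOf G α = 0 := by
  unfold entOf
  split_ifs
  swap; · rfl
  refine le_antisymm ?_ zero_le
  have hlim :
      Tendsto (fun m : ℕ => ENNReal.ofReal (J * (Real.log (m + 2) / m))) atTop (𝓝 0) := by
    simpa using ENNReal.tendsto_ofReal (tendsto_log_add_two_div_atTop.const_mul (J : ℝ))
  refine (limsup_le_limsup (Eventually.of_forall fun m => ?_)).trans_eq hlim.limsup_eq
  refine ENNReal.ofReal_le_ofReal ?_
  rw [← mul_div_assoc, ← Real.log_pow]
  refine div_le_div_of_nonneg_right ?_ m.cast_nonneg
  rcases Nat.eq_zero_or_pos (coverNum (MahavierFin G m) (gridCover α (m + 1))) with h0 | hpos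
  · rw [h0, Nat.cast_zero, Real.log_zero]
    exact Real.log_nonneg (one_le_pow₀ (by linarith))
  · exact Real.log_le_log (by exact_mod_cast hpos) (by exact_mod_cast hN m)

lemma ofReal_le_entOf {G : Set (unitInterval × unitInterval)} {α : Finset (Set unitInterval)}
    (hG : (MahavierInf G).Nonempty) {r : ℝ}
    (hN : ∀ᶠ m : ℕ in atTop,
      r * m ≤ Real.log (coverNum (MahavierFin G m) (gridCover α (m + 1)))) :
    ENNReal.ofReal r ≤ entOf G α := by
  rw [entOf, if_pos hG, ← limsup_const (f := (atTop : Filter ℕ)) (ENNReal.ofReal r)]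
  refine limsup_le_limsup ?_
  filter_upwards [hN, eventually_gt_atTop 0] with m hm hm0
  exact ENNReal.ofReal_le_ofReal ((le_div_iff₀ (by exact_mod_cast hm0)).2 hm)

/-- An antitone `φ : Fin n → Fin J` is recovered from the sizes of its superlevel sets, which
are initial segments of `Fin n`. -/
lemma card_filter_antitone_le (n J : ℕ) :
    (Finset.univ.filter fun φ : Fin n → Fin J => Antitone φ).card ≤ (n + 1) ^ J := by
  let level (φ : Fin n → Fin J) (j : Fin J) : Finset (Fin n) := Finset.univ.filter (j ≤ φ ·)
  have hlower {φ} (hφ : Antitone φ) (j : Fin J) : IsLowerSet (level φ j : Set (Fin n)) :=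
    fun _ _ hle hi => by simpa [level] using (Finset.mem_filter.1 hi).2.trans (hφ hle)
  let code (φ : Fin n → Fin J) (j : Fin J) : Fin (n + 1) :=
    ⟨(level φ j).card, Nat.lt_succ_of_le ((level φ j).card_le_univ.trans_eq (Fintype.card_fin n))⟩
  have hinj : Set.InjOn code (Finset.univ.filter fun φ : Fin n → Fin J => Antitone φ) := by
    intro φ hφ ψ hψ hcode
    have hφ : Antitone φ := (Finset.mem_filter.1 hφ).2
    have hψ : Antitone ψ := (Finset.mem_filter.1 hψ).2
    have hlevel (j : Fin J) : level φ j = level ψ j := by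
      have hcard : (level φ j).card = (level ψ j).card := congrArg Fin.val (congrFun hcode j)
      rcases (hlower hφ j).total (hlower hψ j) with h | h
      · exact Finset.eq_of_subset_of_card_le (Finset.coe_subset.1 h) hcard.ge
      · exact (Finset.eq_of_subset_of_card_le (Finset.coe_subset.1 h) hcard.le).symm
    funext i
    refine eq_of_forall_le_iff fun j => ?_
    simpa [level] using Finset.ext_iff.1 (hlevel j) i
  calc _ ≤ (Finset.univ : Finset (Fin J → Fin (n + 1))).card :=
        Finset.card_le_card_of_injOn code (fun _ _ => Finset.mem_coe.2 (Finset.mem_univ _)) hinj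
    _ = (n + 1) ^ J := by simp

lemma exists_monotone_refinement {α : Finset (Set unitInterval)} (hopen : ∀ u ∈ α, IsOpen u)
    (hcov : ⋃₀ (α : Set (Set unitInterval)) = univ) :
    ∃ (J : ℕ) (π : unitInterval → Fin J) (g : Fin J → Set unitInterval),
      Monotone π ∧ (∀ j, g j ∈ α) ∧ ∀ t, t ∈ g (π t) := by
  obtain ⟨δ, hδ, hball⟩ :=
    lebesgue_number_lemma_of_metric_sUnion isCompact_univ hopen hcov.ge
  obtain ⟨n, hn⟩ := exists_nat_gt δ⁻¹
  have hn0 : (0 : ℝ) < n := (inv_pos.2 hδ).trans hn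
  -- The fibre of `π t = ⌊t n⌋₊` over `j` lies in the ball of radius `1 / n < δ` about `j / n`.
  have hfloor (t : unitInterval) : ⌊(t : ℝ) * n⌋₊ < n + 1 :=
    Nat.lt_succ_of_le (Nat.floor_le_of_le (by nlinarith [t.2.2]))
  let π (t : unitInterval) : Fin (n + 1) := ⟨⌊(t : ℝ) * n⌋₊, hfloor t⟩
  let center (j : Fin (n + 1)) : unitInterval :=
    ⟨j / n, by positivity, div_le_one_of_le₀ (by exact_mod_cast j.is_le) hn0.le⟩
  choose g hgα hg using fun j => hball (center j) (mem_univ _)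
  refine ⟨n + 1, π, g, fun s t hst => ?_, hgα, fun t => hg _ ?_⟩
  · exact Nat.floor_le_floor (by gcongr)
  · set k := ⌊(t : ℝ) * n⌋₊
    have hlo : (k : ℝ) / n ≤ t := (div_le_iff₀ hn0).2 (Nat.floor_le (by nlinarith [t.2.1]))
    have hhi : (t : ℝ) < k / n + (n : ℝ)⁻¹ := by
      rw [← one_div, ← add_div, lt_div_iff₀ hn0]
      exact Nat.lt_floor_add_one _
    have hnδ : (n : ℝ)⁻¹ < δ := by rwa [inv_lt_comm₀ hn0 hδ]
    rw [Metric.mem_ball, Subtype.dist_eq, Real.dist_eq, abs_lt]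
    constructor <;> simp only [center, π] <;> linarith

lemma antitone_of_mem_mahavierFin_triangle {m : ℕ} {x : Fin (m + 1) → unitInterval}
    (hx : x ∈ MahavierFin {z : unitInterval × unitInterval | z.2 ≤ z.1} m) : Antitone x :=
  Fin.antitone_iff_succ_le.2 hx

lemma coverNum_mahavierFin_triangle_le {α : Finset (Set unitInterval)}
    (hopen : ∀ u ∈ α, IsOpen u) (hcov : ⋃₀ (α : Set (Set unitInterval)) = univ) :
    ∃ J : ℕ, ∀ m, coverNum (MahavierFin {z : unitInterval × unitInterval | z.2 ≤ z.1} m)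
      (gridCover α (m + 1)) ≤ (m + 2) ^ J := by
  obtain ⟨J, π, g, hπ, hgα, hg⟩ := exists_monotone_refinement hopen hcov
  refine ⟨J, fun m => ?_⟩
  let box (φ : Fin (m + 1) → Fin J) : Set (Fin (m + 1) → unitInterval) := {x | ∀ i, x i ∈ g (φ i)}
  let F := (Finset.univ.filter fun φ : Fin (m + 1) → Fin J => Antitone φ).image box
  have hFgrid : ↑F ⊆ gridCover α (m + 1) := by
    intro _ hs
    obtain ⟨φ, -, rfl⟩ := Finset.mem_image.1 hs
    exact ⟨fun i => g (φ i), fun i => hgα _, rfl⟩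
  have hcovF : MahavierFin {z : unitInterval × unitInterval | z.2 ≤ z.1} m ⊆ ⋃₀ ↑F :=
    fun x hx => ⟨box (π ∘ x), Finset.mem_image_of_mem _ (Finset.mem_filter.2
      ⟨Finset.mem_univ _, hπ.comp_antitone (antitone_of_mem_mahavierFin_triangle hx)⟩),
      fun i => hg _⟩
  calc _ ≤ F.card := coverNum_le_card hFgrid hcovF
    _ ≤ _ := Finset.card_image_le
    _ ≤ (m + 2) ^ J := card_filter_antitone_le (m + 1) J

lemma ent_triangle_eq_zero : ent {z : unitInterval × unitInterval | z.2 ≤ z.1} = 0 :=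
  ENNReal.iSup_eq_zero.2 fun α =>
    let ⟨J, hJ⟩ := coverNum_mahavierFin_triangle_le (fun u hu => (α.2.1 u hu).1) α.2.2.1
    entOf_eq_zero_of_coverNum_le_pow J hJ

lemma ordConnected_ball_unitInterval (x : unitInterval) (r : ℝ) :
    (Metric.ball x r).OrdConnected := by
  change (Subtype.val ⁻¹' Metric.ball (x : ℝ) r).OrdConnected
  rw [Real.ball_eq_Ioo]
  exact ordConnected_Ioo.preimage_mono (Subtype.mono_coe _)

lemma exists_isMinimalIntervalCover_subset {α₀ : Finset (Set unitInterval)}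
    (hα₀ : ∀ u ∈ α₀, IsOpen u ∧ u.OrdConnected)
    (hcov : ⋃₀ (α₀ : Set (Set unitInterval)) = univ) :
    ∃ α ⊆ α₀, IsMinimalIntervalCover α := by
  obtain ⟨α, hα, hmin⟩ := (α₀.powerset.filter fun β : Finset (Set unitInterval) =>
      ⋃₀ (↑β : Set (Set unitInterval)) = univ).exists_min_image Finset.card
    ⟨α₀, Finset.mem_filter.2 ⟨Finset.mem_powerset_self _, hcov⟩⟩
  obtain ⟨hαα₀, hαcov⟩ := Finset.mem_filter.1 hα
  refine ⟨α, Finset.mem_powerset.1 hαα₀, fun u hu => hα₀ u (Finset.mem_powerset.1 hαα₀ hu),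
    hαcov, fun β hβα hβcov => Finset.eq_of_subset_of_card_le hβα (hmin β ?_)⟩
  exact Finset.mem_filter.2 ⟨Finset.mem_powerset.2 (hβα.trans (Finset.mem_powerset.1 hαα₀)), hβcov⟩

lemma exists_isMinimalIntervalCover_dist_lt {δ : ℝ} (hδ : 0 < δ) :
    ∃ α, IsMinimalIntervalCover α ∧ ∀ u ∈ α, ∀ s ∈ u, ∀ t ∈ u, dist s t < δ := by
  obtain ⟨c, -, hc, hcov⟩ := finite_cover_balls_of_compact (isCompact_univ (X := unitInterval))
    (half_pos hδ)
  obtain ⟨α, hαα₀, hα⟩ := exists_isMinimalIntervalCover_subset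
    (α₀ := hc.toFinset.image (Metric.ball · (δ / 2)))
    (by
      simp only [Finset.mem_image, Set.Finite.mem_toFinset]
      rintro _ ⟨x, -, rfl⟩
      exact ⟨Metric.isOpen_ball, ordConnected_ball_unitInterval x _⟩)
    (by
      refine eq_univ_of_univ_subset (hcov.trans fun t ht => ?_)
      obtain ⟨x, hx, htx⟩ := Set.mem_iUnion₂.1 ht
      exact ⟨_, Finset.mem_image_of_mem _ (hc.mem_toFinset.2 hx), htx⟩)
  refine ⟨α, hα, fun u hu s hs t ht => ?_⟩
  obtain ⟨x, -, rfl⟩ := Finset.mem_image.1 (hαα₀ hu)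
  calc dist s t ≤ dist s x + dist t x := dist_triangle_right s t x
    _ < δ / 2 + δ / 2 := add_lt_add hs ht
    _ = δ := add_halves δ

section UnionPoint

variable {p q : unitInterval}

variable (p q) in
def zigzag (c : ℕ → unitInterval) (i : ℕ) : unitInterval :=
  if i % 3 = 0 then q else if i % 3 = 1 then c (i / 3) else p

lemma zigzag_three_mul_add_one (c : ℕ → unitInterval) (t : ℕ) :
    zigzag p q c (3 * t + 1) = c t := by
  simp [zigzag, show (3 * t + 1) % 3 = 1 by omega, show (3 * t + 1) / 3 = t by omega]

lemma zigzag_mem_mahavierInf {c : ℕ → unitInterval} (hc : ∀ t, p ≤ c t ∧ c t ≤ q) :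
    zigzag p q c ∈ MahavierInf ({z : unitInterval × unitInterval | z.2 ≤ z.1} ∪ {(p, q)}) := by
  intro i
  rcases show i % 3 = 0 ∨ i % 3 = 1 ∨ i % 3 = 2 by omega with h | h | h
  · left
    simpa [zigzag, h, show (i + 1) % 3 = 1 by omega] using (hc _).2
  · left
    simpa [zigzag, h, show (i + 1) % 3 = 2 by omega] using (hc _).1
  · right
    simp [zigzag, h, show (i + 1) % 3 = 0 by omega]

lemma pow_le_coverNum_mahavierFin_union_point (hpq : p ≤ q) {M : ℕ} {y : Fin M → unitInterval}
    (hy : ∀ j, p ≤ y j ∧ y j ≤ q) {α : Finset (Set unitInterval)}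
    (hcov : ⋃₀ (α : Set (Set unitInterval)) = univ)
    (hsep : ∀ u ∈ α, ∀ i j, y i ∈ u → y j ∈ u → i = j) (m : ℕ) :
    M ^ ((m + 1) / 3) ≤ coverNum
      (MahavierFin ({z : unitInterval × unitInterval | z.2 ≤ z.1} ∪ {(p, q)}) m)
      (gridCover α (m + 1)) := by
  let extend (c : Fin ((m + 1) / 3) → Fin M) (t : ℕ) : unitInterval :=
    if h : t < (m + 1) / 3 then y (c ⟨t, h⟩) else p
  have hextend : ∀ c t, p ≤ extend c t ∧ extend c t ≤ q := by
    intro c t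
    unfold extend
    split_ifs
    exacts [hy _, ⟨le_rfl, hpq⟩]
  have h := card_le_coverNum (exists_finset_subset_gridCover hcov _ _)
    (fun c (i : Fin (m + 1)) => zigzag p q (extend c) i)
    (fun c => restrict_mem_mahavierFin (zigzag_mem_mahavierInf (hextend c)) m) ?_
  · simpa using h
  rintro _ ⟨f, hfα, rfl⟩ c d hc hd
  funext t
  have hct := hc ⟨3 * t + 1, by omega⟩
  have hdt := hd ⟨3 * t + 1, by omega⟩
  simp only [zigzag_three_mul_add_one, extend, dif_pos t.2] at hct hdt
  exact hsep _ (hfα _) _ _ hct hdt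

variable (p q) in
def spacedPoint (M : ℕ) (j : Fin M) : unitInterval :=
  ⟨p + ((j : ℝ) / M) • ((q : ℝ) - p), (convex_Icc 0 1).add_smul_sub_mem p.2 q.2
    ⟨by positivity, div_le_one_of_le₀ (by exact_mod_cast j.is_lt.le) M.cast_nonneg⟩⟩

lemma spacedPoint_mem_Icc (hpq : p ≤ q) {M : ℕ} (j : Fin M) :
    p ≤ spacedPoint p q M j ∧ spacedPoint p q M j ≤ q := by
  have hpq : (p : ℝ) ≤ q := hpq
  have hj : (j : ℝ) / M ≤ 1 := div_le_one_of_le₀ (by exact_mod_cast j.is_lt.le) M.cast_nonneg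
  have hj0 : 0 ≤ (j : ℝ) / M := by positivity
  constructor <;> change (_ : ℝ) ≤ _ <;> simp only [spacedPoint, smul_eq_mul] <;> nlinarith

lemma div_le_dist_spacedPoint (hpq : p ≤ q) {M : ℕ} {i j : Fin M} (hij : i < j) :
    ((q : ℝ) - p) / M ≤ dist (spacedPoint p q M i) (spacedPoint p q M j) := by
  have hpq : (0 : ℝ) ≤ q - p := sub_nonneg.2 hpq
  have hji : (1 : ℝ) ≤ j - i := by
    rw [le_sub_iff_add_le']; exact_mod_cast Nat.succ_le_of_lt hij
  rw [Subtype.dist_eq, Real.dist_eq, abs_sub_comm]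
  refine le_trans ?_ (le_abs_self _)
  simp only [spacedPoint, smul_eq_mul]
  rw [add_sub_add_left_eq_sub, ← sub_mul, ← sub_div, div_mul_eq_mul_div]
  exact div_le_div_of_nonneg_right (le_mul_of_one_le_left hpq hji) M.cast_nonneg

lemma ofReal_log_div_six_le_ent (hpq : p < q) {M : ℕ} (hM : 0 < M) :
    ENNReal.ofReal (Real.log M / 6) ≤
      ent ({z : unitInterval × unitInterval | z.2 ≤ z.1} ∪ {(p, q)}) := by
  obtain ⟨α, hα, hdiam⟩ := exists_isMinimalIntervalCover_dist_lt
    (div_pos (sub_pos.2 hpq) (Nat.cast_pos.2 hM))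
  have hsep : ∀ u ∈ α, ∀ i j, spacedPoint p q M i ∈ u → spacedPoint p q M j ∈ u → i = j := by
    intro u hu i j hi hj
    by_contra hne
    rcases lt_or_gt_of_ne hne with h | h
    · exact (div_le_dist_spacedPoint hpq.le h).not_gt (hdiam u hu _ hi _ hj)
    · exact (div_le_dist_spacedPoint hpq.le h).not_gt (hdiam u hu _ hj _ hi)
  have hN := pow_le_coverNum_mahavierFin_union_point hpq.le (spacedPoint_mem_Icc hpq.le) hα.2.1 hsep
  refine le_trans ?_ (le_iSup (fun α : {α // IsMinimalIntervalCover α} => entOf _ α.1) ⟨α, hα⟩)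
  refine ofReal_le_entOf
    ⟨_, zigzag_mem_mahavierInf (c := fun _ => p) fun _ => ⟨le_rfl, hpq.le⟩⟩ ?_
  filter_upwards [eventually_ge_atTop 2] with m hm
  have hm6 : (m : ℝ) ≤ 6 * ((m + 1) / 3 : ℕ) := by
    exact_mod_cast (by omega : m ≤ 6 * ((m + 1) / 3))
  have hlogM : 0 ≤ Real.log M := Real.log_natCast_nonneg M
  calc Real.log M / 6 * m ≤ ((m + 1) / 3 : ℕ) * Real.log M := by nlinarith
    _ = Real.log (M ^ ((m + 1) / 3) : ℕ) := by push_cast; rw [Real.log_pow]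
    _ ≤ _ := Real.log_le_log (by positivity) (by exact_mod_cast hN m)

lemma ent_triangle_union_point_eq_top (hpq : p < q) :
    ent ({z : unitInterval × unitInterval | z.2 ≤ z.1} ∪ {(p, q)}) = ⊤ := by
  refine ENNReal.eq_top_of_forall_nnreal_le fun r => ?_
  obtain ⟨M, hlogM, hM⟩ := ((Real.tendsto_log_atTop.comp tendsto_natCast_atTop_atTop)
    |>.eventually_ge_atTop (6 * r) |>.and (eventually_gt_atTop 0)).exists
  have hlogM : 6 * (r : ℝ) ≤ Real.log M := hlogM
  calc (r : ENNReal) = ENNReal.ofReal (6 * r / 6) := by simp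
    _ ≤ ENNReal.ofReal (Real.log M / 6) := ENNReal.ofReal_le_ofReal (by linarith)
    _ ≤ _ := ofReal_log_div_six_le_ent hpq hM

end UnionPoint

/-- For the triangle `G = {(x,y) ∈ [0,1]² : y ≤ x}` and any point `(p,q)`
with `p < q`, adding `(p,q)` to `G` yields infinite entropy, while `ent(G) = 0`. -/
theorem ent_triangle_union_point (p q : unitInterval) (hpq : p < q) :
    ent ({z : unitInterval × unitInterval | z.2 ≤ z.1} ∪ {(p, q)}) = ⊤ ∧
    ent {z : unitInterval × unitInterval | z.2 ≤ z.1} = 0 :=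
  ⟨ent_triangle_union_point_eq_top hpq, ent_triangle_eq_zero⟩
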